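/- Let n > 1 be a positive integer with F_n = D_n, and let p be the largest prime divisor of n. Then F_{np} = D_{np}. -/
import Mathlib


/-- The map `f` from the paper: `f n = n - 1` if `n` is prime, and otherwise
`f n = n - d n` where `d n = n / n.minFac` is the largest divisor `d` of `n`
with `1 < d < n`. -/
def egf (n : ℕ) : ℕ := if n.Prime then n - 1 else n - n / n.minFac

/-- `F n = {n, f n, f (f n), …, 1}`: the set of iterates of `f` starting at `n`
(the iterates strictly decrease to `1`; we collect all positive iterates). -/
def Fset (n : ℕ) : Set ℕ := {m | 0 < m ∧ ∃ i : ℕ, egf^[i] n = m}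

/-- The sum `∑_{p^k ∣ n} 1/p^k` over all prime power divisors `p^k` of `n`. -/
def ppSum (n : ℕ) : ℚ := ∑ d ∈ n.divisors.filter (fun d => IsPrimePow d), (1 : ℚ) / d

/-- A prime power pseudoperfect number: `n > 1` with `∑_{p^k ∣ n} 1/p^k + 1/n = 1`. -/
def PPPseudoperfect (n : ℕ) : Prop := 1 < n ∧ ppSum n + 1 / n = 1

/-- A prime power Giuga number: a composite `n` with `∑_{p^k ∣ n} 1/p^k - 1/n` a positive integer. -/
def PPGiuga (n : ℕ) : Prop :=
  1 < n ∧ ¬ n.Prime ∧ ∃ m : ℕ, 0 < m ∧ ppSum n - 1 / n = m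

/-- A primary pseudoperfect number: `n > 1` with `∑_{p ∣ n} 1/p + 1/n = 1`. -/
def PrimaryPseudoperfect (n : ℕ) : Prop :=
  1 < n ∧ (∑ p ∈ n.primeFactors, (1 : ℚ) / p) + 1 / n = 1

/-- A Giuga number: a composite `n` with `∑_{p ∣ n} 1/p - 1/n` a positive integer. -/
def Giuga (n : ℕ) : Prop :=
  1 < n ∧ ¬ n.Prime ∧ ∃ m : ℕ, 0 < m ∧ (∑ p ∈ n.primeFactors, (1 : ℚ) / p) - 1 / n = m

/-- A pseudoperfect number: a positive integer that is the sum of a nonempty set of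
distinct divisors `d` with `0 < d < n`. -/
def Pseudoperfect (n : ℕ) : Prop :=
  0 < n ∧ ∃ s : Finset ℕ, s ⊆ n.properDivisors ∧ s.Nonempty ∧ ∑ d ∈ s, d = n

lemma egf_zero : egf 0 = 0 := by simp [egf]

lemma egf_one : egf 1 = 0 := by simp [egf]

lemma egf_prime {q : ℕ} (h : q.Prime) : egf q = q - 1 := if_pos h

lemma egf_le (m : ℕ) : egf m ≤ m := by
  unfold egf; split <;> exact Nat.sub_le _ _

lemma egf_comp {m : ℕ} (h1 : 1 < m) (h2 : ¬ m.Prime) :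
    egf m = m / m.minFac * (m.minFac - 1) := by
  have hqd : m.minFac ∣ m := Nat.minFac_dvd m
  have hmc : m / m.minFac * m.minFac = m := Nat.div_mul_cancel hqd
  rw [egf, if_neg h2, Nat.mul_sub, Nat.mul_one, hmc]

lemma egf_pos {m : ℕ} (hm : 1 < m) : 0 < egf m := by
  by_cases hp : m.Prime
  · rw [egf_prime hp]; omega
  · rw [egf, if_neg hp]
    have h2 : 2 ≤ m.minFac := (Nat.minFac_prime (by omega)).two_le
    have := Nat.div_lt_self (by omega : 0 < m) h2
    omega

lemma egf_lt {m : ℕ} (hm : 1 < m) : egf m < m := by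
  by_cases hp : m.Prime
  · rw [egf_prime hp]; omega
  · rw [egf, if_neg hp]
    have h1 : m.minFac ≤ m := Nat.minFac_le (by omega)
    have h2 : 2 ≤ m.minFac := (Nat.minFac_prime (by omega)).two_le
    have : 0 < m / m.minFac := Nat.div_pos h1 (by omega)
    omega

lemma egf_primes_le {p m : ℕ} (hm : 1 < m)
    (hb : ∀ q, q.Prime → q ∣ m → q ≤ p) :
    ∀ q, q.Prime → q ∣ egf m → q ≤ p := by
  intro q hq hqd
  by_cases hmp : m.Prime
  · rw [egf_prime hmp] at hqd
    have h1 : m ≤ p := hb m hmp dvd_rfl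
    have h2 : q ≤ m - 1 := Nat.le_of_dvd (by omega) hqd
    omega
  · rw [egf_comp hm hmp] at hqd
    have hr := Nat.minFac_prime (show m ≠ 1 by omega)
    rcases (Nat.Prime.dvd_mul hq).mp hqd with h | h
    · exact hb q hq (h.trans (Nat.div_dvd_of_dvd (Nat.minFac_dvd m)))
    · have h1 : q ≤ m.minFac - 1 := Nat.le_of_dvd (by have := hr.two_le; omega) h
      have h2 : m.minFac ≤ p := hb _ hr (Nat.minFac_dvd m)
      omega

lemma minFac_mul {p m : ℕ} (hp : p.Prime) (hm : 1 < m)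
    (hb : ∀ q, q.Prime → q ∣ m → q ≤ p) : (p * m).minFac = m.minFac := by
  have hq := Nat.minFac_prime (show m ≠ 1 by omega)
  have hqd := Nat.minFac_dvd m
  have hpm : p * m ≠ 1 := by
    have h2 : 2 * 2 ≤ p * m := Nat.mul_le_mul hp.two_le hm
    omega
  have hr := Nat.minFac_prime hpm
  have hrd := Nat.minFac_dvd (p * m)
  apply le_antisymm
  · exact Nat.minFac_le_of_dvd hq.two_le (hqd.mul_left p)
  · rcases (Nat.Prime.dvd_mul hr).mp hrd with h | h
    · have heq : (p * m).minFac = p := (Nat.prime_dvd_prime_iff_eq hr hp).mp h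
      rw [heq]; exact hb _ hq hqd
    · exact Nat.minFac_le_of_dvd hr.two_le h

lemma egf_mul {p m : ℕ} (hp : p.Prime) (hm : 1 < m)
    (hb : ∀ q, q.Prime → q ∣ m → q ≤ p) : egf (p * m) = p * egf m := by
  have hmin := minFac_mul hp hm hb
  have hqd : m.minFac ∣ m := Nat.minFac_dvd m
  have hnp : ¬ (p * m).Prime :=
    Nat.not_prime_mul (by have := hp.two_le; omega) (by omega)
  rw [egf, if_neg hnp, hmin, Nat.mul_div_assoc p hqd]
  by_cases hmp : m.Prime
  · rw [hmp.minFac_eq, Nat.div_self (by omega), egf_prime hmp, Nat.mul_sub, Nat.mul_one]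
  · rw [egf, if_neg hmp, Nat.mul_sub]

lemma egf_dvd_p {p m : ℕ} (hp : p.Prime) (hlt : p < m) (hdvd : p ∣ m)
    (hb : ∀ q, q.Prime → q ∣ m → q ≤ p) : p ∣ egf m := by
  have hm : 1 < m := lt_trans hp.one_lt hlt
  have hmp : ¬ m.Prime := by
    intro hmm
    exact absurd ((Nat.prime_dvd_prime_iff_eq hp hmm).mp hdvd) (by omega)
  rw [egf_comp hm hmp]
  have hqp := Nat.minFac_prime (show m ≠ 1 by omega)
  have hqd : m.minFac ∣ m := Nat.minFac_dvd m
  refine Dvd.dvd.mul_right ?_ _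
  by_cases hqe : m.minFac = p
  · -- m is a power of p; show p ∣ m / p
    obtain ⟨k, hk⟩ := hdvd
    have hk2 : 2 ≤ k := by
      rcases Nat.lt_or_ge k 2 with h | h
      · interval_cases k <;> omega
      · exact h
    have hdivk : m / m.minFac = k := by rw [hqe, hk, Nat.mul_div_cancel_left _ hp.pos]
    rw [hdivk]
    have hrk := Nat.minFac_prime (show k ≠ 1 by omega)
    have hrkd : k.minFac ∣ m := (Nat.minFac_dvd k).mul_left p |>.trans (by rw [hk])
    have h1 : k.minFac ≤ p := hb _ hrk hrkd
    have h2 : m.minFac ≤ k.minFac := Nat.minFac_le_of_dvd hrk.two_le hrkd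
    have : k.minFac = p := by omega
    rw [← this]; exact Nat.minFac_dvd k
  · have hcop : Nat.Coprime p m.minFac :=
      (Nat.coprime_primes hp hqp).mpr (fun hh => hqe hh.symm)
    have hmeq : m.minFac * (m / m.minFac) = m := Nat.mul_div_cancel' hqd
    exact hcop.dvd_of_dvd_mul_left (by rw [hmeq]; exact hdvd)

lemma iter_le (m : ℕ) : ∀ j, egf^[j] m ≤ m := by
  intro j; induction j with
  | zero => rfl
  | succ j ih =>
    rw [Function.iterate_succ_apply']
    exact le_trans (egf_le _) ih

lemma iter_zero : ∀ j, egf^[j] 0 = 0 := by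
  intro j; induction j with
  | zero => rfl
  | succ j ih => rw [Function.iterate_succ_apply', ih, egf_zero]

lemma reach_one : ∀ m, 0 < m → ∃ i, egf^[i] m = 1 := by
  intro m
  induction m using Nat.strong_induction_on with
  | _ m ih =>
    intro hm
    rcases Nat.lt_or_ge m 2 with h | h
    · exact ⟨0, by rw [Function.iterate_zero_apply]; omega⟩
    · obtain ⟨i, hi⟩ := ih (egf m) (egf_lt (by omega)) (egf_pos (by omega))
      exact ⟨i + 1, by rw [Function.iterate_succ_apply, hi]⟩

/-- if `n > 1` satisfies `F n = D n` and `p` is the largest prime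
divisor of `n`, then `F (n*p) = D (n*p)`. -/
theorem stmt4 (n p : ℕ) (hn : 1 < n) (h : Fset n = (n.divisors : Set ℕ))
    (hp : p ∈ n.primeFactors) (hpmax : ∀ q ∈ n.primeFactors, q ≤ p) :
    Fset (n * p) = ((n * p).divisors : Set ℕ) := by
  obtain ⟨hpp, hpn, -⟩ := Nat.mem_primeFactors.mp hp
  have hbn : ∀ q, q.Prime → q ∣ n → q ≤ p := fun q hq hqd =>
    hpmax q (Nat.mem_primeFactors.mpr ⟨hq, hqd, by omega⟩)
  have hF : ∀ m, (0 < m ∧ ∃ i, egf^[i] n = m) ↔ (m ∣ n ∧ n ≠ 0) := by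
    intro m
    rw [Set.ext_iff] at h
    have := h m
    simpa [Fset, Nat.mem_divisors] using this
  have hnp0 : n * p ≠ 0 := Nat.mul_ne_zero (by omega) (by have := hpp.two_le; omega)
  -- Invariant along the chain of n
  have Inv : ∀ i, egf^[i] n = 0 ∨ (0 < egf^[i] n ∧
      (∀ q, q.Prime → q ∣ egf^[i] n → q ≤ p) ∧
      (p ∣ egf^[i] n ∨ egf^[i] n < p)) := by
    intro i; induction i with
    | zero => rw [Function.iterate_zero_apply]; exact Or.inr ⟨by omega, hbn, Or.inl hpn⟩
    | succ i ih =>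
      rw [Function.iterate_succ_apply']
      rcases ih with h0 | ⟨hpos, hb, hdp⟩
      · left; rw [h0, egf_zero]
      · by_cases hd1 : egf^[i] n = 1
        · left; rw [hd1, egf_one]
        · have hd : 1 < egf^[i] n := by omega
          right
          refine ⟨egf_pos hd, egf_primes_le hd hb, ?_⟩
          rcases hdp with hpd | hlt
          · rcases eq_or_lt_of_le (Nat.le_of_dvd (by omega) hpd) with heq | hlt'
            · right; rw [← heq, egf_prime hpp]
              have := hpp.two_le; omega
            · left; exact egf_dvd_p hpp hlt' hpd hb
          · right; exact lt_trans (egf_lt hd) hlt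
  -- Scaling of iterates
  have hL2 : ∀ i, 0 < egf^[i] n → egf^[i] (n * p) = p * egf^[i] n := by
    intro i; induction i with
    | zero => intro _; simp [mul_comm]
    | succ i ih =>
      intro hpos
      simp only [Function.iterate_succ_apply'] at hpos ⊢
      have hd1 : 1 < egf^[i] n := by
        by_contra hh
        have : egf^[i] n = 0 ∨ egf^[i] n = 1 := by omega
        rcases this with h0 | h0 <;> rw [h0] at hpos <;>
          simp [egf_zero, egf_one] at hpos
      have hb : ∀ q, q.Prime → q ∣ egf^[i] n → q ≤ p := by
        rcases Inv i with h0 | ⟨-, hb, -⟩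
        · omega
        · exact hb
      rw [ih (by omega), egf_mul hpp hd1 hb]
  obtain ⟨k1, hk1⟩ := reach_one n (by omega)
  have hk1pos : ∀ i, i ≤ k1 → 0 < egf^[i] n := by
    intro i hi
    by_contra h0
    have h0' : egf^[i] n = 0 := by omega
    have : egf^[k1] n = 0 := by
      rw [show k1 = (k1 - i) + i by omega, Function.iterate_add_apply, h0', iter_zero]
    omega
  obtain ⟨k2, hk2⟩ : ∃ k2, egf^[k2] n = p := ((hF p).mpr ⟨hpn, by omega⟩).2
  have hstep : egf^[k1 + 1] (n * p) = p - 1 := by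
    rw [Function.iterate_succ_apply', hL2 k1 (by omega), hk1, mul_one, egf_prime hpp]
  have hstep2 : egf^[k2 + 1] n = p - 1 := by
    rw [Function.iterate_succ_apply', hk2, egf_prime hpp]
  ext m
  simp only [Fset, Set.mem_setOf_eq, Finset.mem_coe, Nat.mem_divisors]
  constructor
  · rintro ⟨hm, i, hi⟩
    refine ⟨?_, hnp0⟩
    by_cases hik : i ≤ k1
    · rw [hL2 i (hk1pos i hik)] at hi
      have hdn : egf^[i] n ∣ n := ((hF _).mp ⟨hk1pos i hik, i, rfl⟩).1
      rw [← hi, mul_comm n p]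
      exact mul_dvd_mul_left p hdn
    · push_neg at hik
      have him : egf^[(i - (k1 + 1)) + (k1 + 1)] (n * p) = m := by
        rw [show i - (k1 + 1) + (k1 + 1) = i by omega]; exact hi
      rw [Function.iterate_add_apply, hstep] at him
      have hin : egf^[(i - (k1 + 1)) + (k2 + 1)] n = m := by
        rw [Function.iterate_add_apply, hstep2, him]
      have hmn : m ∣ n := ((hF m).mp ⟨hm, _, hin⟩).1
      exact hmn.trans (dvd_mul_right n p)
  · rintro ⟨hd, -⟩
    have hm : 0 < m := Nat.pos_of_dvd_of_pos hd (by omega)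
    refine ⟨hm, ?_⟩
    by_cases hpd : p ∣ m
    · obtain ⟨e, he⟩ := hpd
      have hedvd : e ∣ n := by
        have h1 : p * e ∣ p * n := by rw [← he, mul_comm p n]; exact hd
        exact (mul_dvd_mul_iff_left (show p ≠ 0 by have := hpp.two_le; omega)).mp h1
      have hepos : 0 < e := by
        rcases Nat.eq_zero_or_pos e with h0 | h0
        · rw [h0, mul_zero] at he; omega
        · exact h0
      obtain ⟨-, i, hi⟩ := (hF e).mpr ⟨hedvd, by omega⟩
      exact ⟨i, by rw [hL2 i (by omega), hi, ← he]⟩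
    · have hdn : m ∣ n :=
        Nat.Coprime.dvd_of_dvd_mul_right
          (Nat.Coprime.symm (hpp.coprime_iff_not_dvd.mpr hpd)) hd
      obtain ⟨-, i, hi⟩ := (hF m).mpr ⟨hdn, by omega⟩
      have hmlt : m < p := by
        rcases Inv i with h0 | ⟨-, -, hor⟩
        · omega
        · rw [hi] at hor
          rcases hor with h' | h'
          · exact absurd h' hpd
          · exact h'
      have hik2 : k2 < i := by
        by_contra hh
        push_neg at hh
        have h1 : egf^[k2] n ≤ egf^[i] n := by
          rw [show k2 = (k2 - i) + i by omega, Function.iterate_add_apply]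
          exact iter_le _ _
        omega
      refine ⟨(i - (k2 + 1)) + (k1 + 1), ?_⟩
      rw [Function.iterate_add_apply, hstep]
      rw [show i = (i - (k2 + 1)) + (k2 + 1) by omega, Function.iterate_add_apply, hstep2] at hi
      exact hi
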